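/- Let d ≥ 3 be an odd integer, let r ≤ d−2 be an integer with gcd(r,d)=1, and let n be a positive integer with n ≡ −r (mod d) and n ≥ d−r. Then, as rational functions in the two variables a and q over ℚ, ∑_{k=0}^{n−1} [ ∏_{i=1}^{(d−1)/2} (a^{d+1−2i} q^r; q^d)_k (a^{2i−d−1} q^r; q^d)_k ] · (q^r;q^d)_k · q^{dk} / ( [ ∏_{i=1}^{(d−1)/2} (a^{d−2i} q^d; q^d)_k (a^{2i−d} q^d; q^d)_k ] · (q^d;q^d)_k ) ≡ 0 (mod (1 − a q^n)(a − q^n)). (Here the numerator parameters are a^{d−1}q^r, a^{d−3}q^r, …, a^2 q^r, their reciprocals-in-a counterparts a^{1−d}q^r, …, a^{−2}q^r, and q^r; the denominator parameters are a^{d−2}q^d, …, a q^d, a^{2−d}q^d, …, a^{−1}q^d, and q^d.) -/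

import Mathlib

open Finset

/-- Polynomials in the two variables `a` (index 0) and `q` (index 1) over `ℚ`. -/
abbrev MvP : Type := MvPolynomial (Fin 2) ℚ

/-- The field of rational functions in the two variables `a` and `q` over `ℚ`. -/
abbrev FF : Type := FractionRing MvP

/-- The variable `a`, viewed in the field of rational functions. -/
noncomputable def av : FF := algebraMap MvP FF (MvPolynomial.X 0)

/-- The variable `q`, viewed in the field of rational functions. -/
noncomputable def qv : FF := algebraMap MvP FF (MvPolynomial.X 1)

/-- The q-shifted factorial `(x; q)_k = ∏_{j=0}^{k-1} (1 - x q^j)`. -/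
noncomputable def poch (x q : FF) (k : ℕ) : FF :=
  ∏ j ∈ Finset.range k, (1 - x * q ^ j)

/-- `A ≡ 0 (mod P)`: `A = P · (B / C)` where the denominator `C` is coprime
(has no common non-unit factor) with `P`. -/
def CongrZero (A : FF) (P : MvP) : Prop :=
  ∃ B C : MvP, C ≠ 0 ∧ IsRelPrime C P ∧
    A = algebraMap MvP FF P * (algebraMap MvP FF B / algebraMap MvP FF C)

/-!
Put `Q = q^d`, `dm = (d-1)n - r` and `dμ = n + r - d`. At `a = q^n` the numerator parameter
`a^{1-d} q^r` becomes `Q^{-m}` and every other numerator parameter is `Q^μ` times a denominator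
parameter, so the `k`-th term is `(Q^{-m};Q)_k Q^k / (Q;Q)_k` times a polynomial in `Q^k` of
degree `(d-1)μ < m`; such sums vanish by the terminating `q`-binomial theorem. The summand is
invariant under `a ↦ a⁻¹`, so the sum also vanishes at `a = q^{-n}`. As `gcd(d, n) = 1`, no
denominator vanishes at `a = q^{±n}`; hence the reduced numerator of the sum is divisible by the
non-associated primes `a - q^n` and `1 - a q^n`, while its reduced denominator is prime to both.
-/

section QPochhammer

variable {R : Type*} [CommRing R]

def qPoch (x q : R) (k : ℕ) : R :=
  ∏ j ∈ range k, (1 - x * q ^ j)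

theorem qPoch_succ (x q : R) (k : ℕ) : qPoch x q (k + 1) = qPoch x q k * (1 - x * q ^ k) :=
  prod_range_succ _ _

theorem qPoch_succ' (x q : R) (k : ℕ) : qPoch x q (k + 1) = (1 - x) * qPoch (x * q) q k := by
  simp only [qPoch, prod_range_succ', pow_succ', pow_zero, mul_one, mul_assoc, mul_comm q]
  ring

theorem qPoch_succ_eq_sub (x q : R) (k : ℕ) :
    qPoch x q (k + 1) = qPoch (x * q) q (k + 1) - x * (1 - q ^ (k + 1)) * qPoch (x * q) q k := by
  rw [qPoch_succ', qPoch_succ]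
  ring

theorem qPoch_mul_pow_mul_prod (x q : R) (μ k : ℕ) :
    qPoch (x * q ^ μ) q k * ∏ j ∈ range μ, (1 - x * q ^ j)
      = qPoch x q k * ∏ j ∈ range μ, (1 - x * q ^ j * q ^ k) := by
  have h₁ : qPoch (x * q ^ μ) q k * ∏ j ∈ range μ, (1 - x * q ^ j)
      = ∏ j ∈ range (μ + k), (1 - x * q ^ j) := by
    simp only [qPoch, prod_range_add, pow_add, mul_assoc, mul_comm]
  have h₂ : qPoch x q k * ∏ j ∈ range μ, (1 - x * q ^ j * q ^ k)
      = ∏ j ∈ range (k + μ), (1 - x * q ^ j) := by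
    simp only [qPoch, prod_range_add, pow_add, mul_left_comm, mul_comm]
  rw [h₁, h₂, add_comm]

theorem qPoch_mem {S : Type*} [SetLike S R] [SubringClass S R] (s : S) {x q : R} (hx : x ∈ s)
    (hq : q ∈ s) (k : ℕ) : qPoch x q k ∈ s :=
  prod_mem fun j _ => sub_mem (one_mem s) (mul_mem hx (pow_mem hq j))

end QPochhammer

section NonTorsion

variable {K : Type*} [Field K] {q : K}

theorem ne_zero_of_zpow_injective (hq : Function.Injective (q ^ · : ℤ → K)) : q ≠ 0 := by
  rintro rfl
  have := @hq 1 2 (by simp)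
  omega

theorem pow_ne_one_of_zpow_injective (hq : Function.Injective (q ^ · : ℤ → K)) {t : ℕ}
    (ht : t ≠ 0) : q ^ t ≠ 1 := fun h =>
  ht (by exact_mod_cast @hq t 0 (by simpa using h))

theorem zpow_injective_pow (hq : Function.Injective (q ^ · : ℤ → K)) {d : ℕ} (hd : d ≠ 0) :
    Function.Injective ((q ^ d) ^ · : ℤ → K) := fun a b h => by
  simp only [← zpow_natCast, ← zpow_mul] at h
  exact mul_left_cancel₀ (by exact_mod_cast hd) (hq h)

end NonTorsion

section TerminatingSums

open Polynomial

variable {K : Type*} [Field K]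

theorem qPoch_ne_zero {x q : K} (h : ∀ j : ℕ, x * q ^ j ≠ 1) (k : ℕ) : qPoch x q k ≠ 0 :=
  prod_ne_zero_iff.2 fun j _ => sub_ne_zero.2 (h j).symm

theorem qPoch_zpow_neg_eq_zero {Q : K} (hQ : Q ≠ 0) (m : ℕ) {k : ℕ} (hk : m < k) :
    qPoch (Q ^ (-(m : ℤ))) Q k = 0 :=
  prod_eq_zero (mem_range.2 hk) (by
    rw [← zpow_natCast, ← zpow_add₀ hQ, neg_add_cancel, zpow_zero, sub_self])

theorem qPoch_mul_pow_div_qPoch {x q : K} (hx : ∀ j : ℕ, x * q ^ j ≠ 1) (μ k : ℕ) :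
    qPoch (x * q ^ μ) q k / qPoch x q k
      = ∏ j ∈ range μ, (1 - x * q ^ j)⁻¹ * (1 - x * q ^ j * q ^ k) := by
  have hprod : ∏ j ∈ range μ, (1 - x * q ^ j) ≠ 0 :=
    prod_ne_zero_iff.2 fun j _ => sub_ne_zero.2 (hx j).symm
  rw [prod_mul_distrib, prod_inv_distrib, div_eq_iff (qPoch_ne_zero hx k)]
  field_simp
  rw [qPoch_mul_pow_mul_prod, mul_comm]

variable {Q : K} (hQ : Function.Injective (Q ^ · : ℤ → K))
include hQ

theorem qPoch_self_ne_zero (k : ℕ) : qPoch Q Q k ≠ 0 :=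
  qPoch_ne_zero (fun j => by
    rw [← pow_succ']; exact pow_ne_one_of_zpow_injective hQ j.succ_ne_zero) k

/-- The terminating `q`-binomial theorem. -/
theorem sum_qPoch_zpow_neg_mul_pow (m : ℕ) (z : K) :
    ∑ k ∈ range (m + 1), qPoch (Q ^ (-(m : ℤ))) Q k / qPoch Q Q k * z ^ k
      = ∏ i ∈ range m, (1 - z * Q ^ (-(i : ℤ) - 1)) := by
  have hQ0 := ne_zero_of_zpow_injective hQ
  set c : ℕ → ℕ → K := fun m k => qPoch (Q ^ (-(m : ℤ))) Q k / qPoch Q Q k with hc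
  have pascal (m k : ℕ) : c (m + 1) (k + 1) = c m (k + 1) - Q ^ (-(m : ℤ) - 1) * c m k := by
    have hmul : Q ^ (-((m + 1 : ℕ) : ℤ)) * Q = Q ^ (-(m : ℤ)) := by
      rw [← zpow_add_one₀ hQ0]
      congr 1
      push_cast
      ring
    have hden : qPoch Q Q (k + 1) = qPoch Q Q k * (1 - Q ^ (k + 1)) := by
      rw [qPoch_succ, ← pow_succ']
    have h1 : (1 : K) - Q ^ (k + 1) ≠ 0 :=
      sub_ne_zero.2 (pow_ne_one_of_zpow_injective hQ k.succ_ne_zero).symm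
    simp only [hc, qPoch_succ_eq_sub (Q ^ (-((m + 1 : ℕ) : ℤ))), hmul, hden]
    field_simp [qPoch_self_ne_zero hQ k]
    rw [Nat.cast_succ, neg_add']
    ring
  induction m generalizing z with
  | zero => simp [qPoch]
  | succ m ih =>
    have hc0 (m : ℕ) : c m 0 = 1 := by simp [hc, qPoch]
    have hvan : c m (m + 1) = 0 := by
      simp only [hc, qPoch_zpow_neg_eq_zero hQ0 m (Nat.lt_succ_self m), zero_div]
    have hshift : 1 + ∑ k ∈ range (m + 1), c m (k + 1) * z ^ (k + 1)
        = ∑ k ∈ range (m + 1), c m k * z ^ k := by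
      have h := sum_range_succ' (fun k => c m k * z ^ k) (m + 1)
      rw [sum_range_succ, hvan, hc0, zero_mul, add_zero, pow_zero, one_mul] at h
      rw [h, add_comm]
    calc ∑ k ∈ range (m + 1 + 1), c (m + 1) k * z ^ k
        = 1 + ∑ k ∈ range (m + 1), c (m + 1) (k + 1) * z ^ (k + 1) := by
          rw [sum_range_succ', hc0]; ring
      _ = (1 + ∑ k ∈ range (m + 1), c m (k + 1) * z ^ (k + 1))
            - Q ^ (-(m : ℤ) - 1) * z * ∑ k ∈ range (m + 1), c m k * z ^ k := by
          rw [mul_sum, add_sub_assoc, ← sum_sub_distrib]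
          congr 1
          exact sum_congr rfl fun k _ => by rw [pascal]; ring
      _ = (1 - z * Q ^ (-(m : ℤ) - 1)) * ∑ k ∈ range (m + 1), c m k * z ^ k := by
          rw [hshift]
          ring
      _ = _ := by
          rw [ih, prod_range_succ]
          ring

theorem sum_qPoch_zpow_neg_mul_eval_eq_zero {m : ℕ} {p : K[X]} (hp : p.natDegree < m) :
    ∑ k ∈ range (m + 1), qPoch (Q ^ (-(m : ℤ))) Q k / qPoch Q Q k * Q ^ k * p.eval (Q ^ k) = 0 := by
  have hQ0 := ne_zero_of_zpow_injective hQ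
  have hcoeff (i : ℕ) (hi : i < m) :
      ∑ k ∈ range (m + 1), qPoch (Q ^ (-(m : ℤ))) Q k / qPoch Q Q k * (Q ^ (i + 1)) ^ k = 0 := by
    rw [sum_qPoch_zpow_neg_mul_pow hQ]
    refine prod_eq_zero (mem_range.2 hi) ?_
    rw [← zpow_natCast, ← zpow_add₀ hQ0, Nat.cast_succ, add_add_sub_cancel, add_neg_cancel,
      zpow_zero, sub_self]
  simp only [eval_eq_sum_range, mul_sum]
  rw [sum_comm]
  refine sum_eq_zero fun i hi => ?_
  rw [← mul_zero (p.coeff i), ← hcoeff i (by rw [mem_range] at hi; omega), mul_sum]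
  refine sum_congr rfl fun k _ => ?_
  ring

/-- The `k`-th term is `(Q^{-m};Q)_k Q^k / (Q;Q)_k` times a polynomial in `Q^k` of degree at most
`#s * μ`. -/
theorem sum_qPoch_shift_eq_zero {ι : Type*} (s : Finset ι) {b : ι → K}
    (hb : ∀ l ∈ s, ∀ j : ℕ, b l * Q ^ j ≠ 1) {m μ N : ℕ} (hsm : #s * μ < m) (hmN : m < N) :
    ∑ k ∈ range N, qPoch (Q ^ (-(m : ℤ))) Q k * (∏ l ∈ s, qPoch (b l * Q ^ μ) Q k) * Q ^ k
      / (qPoch Q Q k * ∏ l ∈ s, qPoch (b l) Q k) = 0 := by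
  set p : K[X] := ∏ l ∈ s, ∏ j ∈ range μ, C (1 - b l * Q ^ j)⁻¹ * (1 - C (b l * Q ^ j) * X)
  have hdeg : p.natDegree < m := by
    refine lt_of_le_of_lt ((natDegree_prod_le _ _).trans
      (sum_le_card_nsmul _ _ μ fun l _ => ?_)) (by simpa using hsm)
    refine (natDegree_prod_le _ _).trans ((sum_le_card_nsmul _ _ 1 fun j _ => ?_).trans (by simp))
    exact (natDegree_C_mul_le _ _).trans (by compute_degree)
  have hterm (k : ℕ) : qPoch (Q ^ (-(m : ℤ))) Q k * (∏ l ∈ s, qPoch (b l * Q ^ μ) Q k) * Q ^ k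
      / (qPoch Q Q k * ∏ l ∈ s, qPoch (b l) Q k)
        = qPoch (Q ^ (-(m : ℤ))) Q k / qPoch Q Q k * Q ^ k * p.eval (Q ^ k) := by
    have hratio : p.eval (Q ^ k) = ∏ l ∈ s, qPoch (b l * Q ^ μ) Q k / qPoch (b l) Q k := by
      simp only [p, eval_prod, eval_mul, eval_C, eval_sub, eval_one, eval_X]
      exact prod_congr rfl fun l hl => (qPoch_mul_pow_div_qPoch (hb l hl) μ k).symm
    rw [hratio, prod_div_distrib]
    ring
  rw [sum_congr rfl fun k _ => hterm k,
    ← sum_subset (range_subset_range.2 hmN) fun k _ hk => ?_]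
  · exact sum_qPoch_zpow_neg_mul_eval_eq_zero hQ hdeg
  · rw [qPoch_zpow_neg_eq_zero (ne_zero_of_zpow_injective hQ) m (by simpa using hk)]
    simp

end TerminatingSums

theorem prod_Icc_one_mul_succ {M : Type*} [CommMonoid M] (g : ℕ → M) (h : ℕ) :
    (∏ i ∈ Icc 1 h, g i) * g (h + 1) = g 1 * ∏ i ∈ Icc 1 h, g (i + 1) := by
  induction h with
  | zero => simp
  | succ h ih => rw [prod_Icc_succ_top (by omega), ih, prod_Icc_succ_top (by omega), mul_assoc]

section Summand

variable {K : Type*} [Field K]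

-- `hypSum d n r a q` is the sum of the theorem, as a function of `a` and `q`.
def hypNum (d : ℕ) (r : ℤ) (A q : K) (k : ℕ) : K :=
  (∏ i ∈ Icc 1 ((d - 1) / 2),
      qPoch (A ^ ((d : ℤ) + 1 - 2 * (i : ℤ)) * q ^ r) (q ^ d) k
        * qPoch (A ^ (2 * (i : ℤ) - (d : ℤ) - 1) * q ^ r) (q ^ d) k)
    * qPoch (q ^ r) (q ^ d) k * q ^ (d * k)

def hypDen (d : ℕ) (A q : K) (k : ℕ) : K :=
  (∏ i ∈ Icc 1 ((d - 1) / 2),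
      qPoch (A ^ ((d : ℤ) - 2 * (i : ℤ)) * q ^ (d : ℤ)) (q ^ d) k
        * qPoch (A ^ (2 * (i : ℤ) - (d : ℤ)) * q ^ (d : ℤ)) (q ^ d) k)
    * qPoch (q ^ d) (q ^ d) k

def hypSum (d n : ℕ) (r : ℤ) (A q : K) : K :=
  ∑ k ∈ range n, hypNum d r A q k / hypDen d A q k

theorem hypSum_inv (d n : ℕ) (r : ℤ) (A q : K) : hypSum d n r A⁻¹ q = hypSum d n r A q := by
  have hnum (k : ℕ) : hypNum d r A⁻¹ q k = hypNum d r A q k := by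
    simp only [hypNum, inv_zpow']
    congr 2
    refine prod_congr rfl fun i _ => ?_
    rw [mul_comm]
    congr 4 <;> ring
  have hden (k : ℕ) : hypDen d A⁻¹ q k = hypDen d A q k := by
    simp only [hypDen, inv_zpow']
    congr 1
    refine prod_congr rfl fun i _ => ?_
    rw [mul_comm]
    congr 4 <;> ring
  simp only [hypSum, hnum, hden]

/-- At `a = q^e` the denominator parameters `a^{±(d-2i)} q^d`, `1 ≤ i ≤ (d-1)/2`, are the
`q ^ denExp d e x` with `x ∈ denIdx d`. -/
def denIdx (d : ℕ) : Finset (ℕ ⊕ ℕ) :=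
  (Icc 1 ((d - 1) / 2)).disjSum (Icc 1 ((d - 1) / 2))

def denExp (d : ℕ) (e : ℤ) : ℕ ⊕ ℕ → ℤ :=
  Sum.elim (fun i => e * ((d : ℤ) - 2 * i) + d) (fun i => -e * ((d : ℤ) - 2 * i) + d)

variable {q : K}

theorem hypDen_zpow (hq : q ≠ 0) (d : ℕ) (e : ℤ) (k : ℕ) :
    hypDen d (q ^ e) q k = qPoch (q ^ d) (q ^ d) k
      * ∏ x ∈ denIdx d, qPoch (q ^ denExp d e x) (q ^ d) k := by
  rw [hypDen, denIdx, prod_disjSum, ← prod_mul_distrib, mul_comm]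
  congr 1
  refine prod_congr rfl fun i _ => ?_
  simp only [denExp, Sum.elim_inl, Sum.elim_inr, ← zpow_mul, ← zpow_add₀ hq]
  congr 4
  ring

theorem hypNum_zpow (hq : q ≠ 0) {d m μ : ℕ} {e r : ℤ} (hodd : Odd d)
    (hm : (d : ℤ) * m = (d - 1) * e - r) (hμ : (d : ℤ) * μ = e + r - d) (k : ℕ) :
    hypNum d r (q ^ e) q k = qPoch ((q ^ d) ^ (-(m : ℤ))) (q ^ d) k
      * (∏ x ∈ denIdx d, qPoch (q ^ denExp d e x * (q ^ d) ^ μ) (q ^ d) k) * (q ^ d) ^ k := by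
  obtain ⟨h, hdh⟩ := hodd
  have hh : (d - 1) / 2 = h := by omega
  have hA (a c : ℤ) : (q ^ e) ^ a * q ^ c = q ^ (e * a + c) := by
    rw [← zpow_mul, ← zpow_add₀ hq]
  have hQμ (a : ℤ) : q ^ a * (q ^ d) ^ μ = q ^ (a + d * μ) := by
    rw [← pow_mul, ← zpow_natCast, ← zpow_add₀ hq, Nat.cast_mul]
  have hplus : ∏ i ∈ Icc 1 h, qPoch ((q ^ e) ^ ((d : ℤ) + 1 - 2 * (i : ℤ)) * q ^ r) (q ^ d) k
      = ∏ i ∈ Icc 1 h, qPoch (q ^ denExp d e (Sum.inl i) * (q ^ d) ^ μ) (q ^ d) k := by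
    refine prod_congr rfl fun i _ => ?_
    rw [hA, hQμ]
    congr 2
    simp only [denExp, Sum.elim_inl]
    linear_combination -hμ
  -- the other numerator parameters are those of `hplus` shifted by one index, plus `Q^{-m}`
  have hminus : (∏ i ∈ Icc 1 h, qPoch ((q ^ e) ^ (2 * (i : ℤ) - (d : ℤ) - 1) * q ^ r) (q ^ d) k)
        * qPoch (q ^ r) (q ^ d) k
      = qPoch ((q ^ d) ^ (-(m : ℤ))) (q ^ d) k
        * ∏ i ∈ Icc 1 h, qPoch (q ^ denExp d e (Sum.inr i) * (q ^ d) ^ μ) (q ^ d) k := by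
    have hshift := prod_Icc_one_mul_succ
      (fun i : ℕ => qPoch ((q ^ e) ^ (2 * (i : ℤ) - (d : ℤ) - 1) * q ^ r) (q ^ d) k) h
    have htop : 2 * ((h + 1 : ℕ) : ℤ) - d - 1 = 0 := by push_cast; omega
    simp only [htop, zpow_zero, one_mul] at hshift
    rw [hshift]
    congr 1
    · rw [hA, ← zpow_natCast q d, ← zpow_mul]
      congr 2
      linear_combination hm
    · refine prod_congr rfl fun i _ => ?_
      rw [hA, hQμ]
      congr 2
      simp only [denExp, Sum.elim_inr]
      push_cast
      linear_combination -hμ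
  rw [hypNum, denIdx, hh, prod_mul_distrib, mul_assoc (∏ _ ∈ _, _), hminus, hplus, prod_disjSum,
    pow_mul]
  ring

theorem zpow_denExp_mul_pow_ne_one (hq : Function.Injective (q ^ · : ℤ → K)) {d : ℕ} {e : ℤ}
    (hde : IsCoprime (d : ℤ) e) :
    ∀ x ∈ denIdx d, ∀ j : ℕ,
      q ^ denExp d e x * (q ^ d) ^ j ≠ 1 := by
  have key {e : ℤ} (hde : IsCoprime (d : ℤ) e) {i : ℕ} (hi : i ∈ Icc 1 ((d - 1) / 2)) (j : ℕ) :
      q ^ (e * ((d : ℤ) - 2 * i) + d) * (q ^ d) ^ j ≠ 1 := by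
    obtain ⟨hi1, hi2⟩ := mem_Icc.1 hi
    intro h
    rw [← pow_mul, ← zpow_natCast, ← zpow_add₀ (ne_zero_of_zpow_injective hq), ← zpow_zero q] at h
    have hdvd : (d : ℤ) ∣ ((d : ℤ) - 2 * i) * e :=
      ⟨-(1 + j), by push_cast at h; linear_combination hq h⟩
    have := Int.le_of_dvd (by omega) (hde.dvd_of_dvd_mul_right hdvd)
    omega
  rintro (i | i) hi
  · exact key hde (by simpa [denIdx] using hi)
  · exact key hde.neg_right (by simpa [denIdx] using hi)

theorem hypDen_zpow_ne_zero (hq : Function.Injective (q ^ · : ℤ → K)) {d : ℕ} (hd : d ≠ 0) {e : ℤ}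
    (hde : IsCoprime (d : ℤ) e) (k : ℕ) : hypDen d (q ^ e) q k ≠ 0 := by
  rw [hypDen_zpow (ne_zero_of_zpow_injective hq)]
  exact mul_ne_zero (qPoch_self_ne_zero (zpow_injective_pow hq hd) k)
    (prod_ne_zero_iff.2 fun x hx => qPoch_ne_zero (zpow_denExp_mul_pow_ne_one hq hde x hx) k)

theorem hypSum_zpow_eq_zero (hq : Function.Injective (q ^ · : ℤ → K)) {d n m μ : ℕ} {r : ℤ}
    (hodd : Odd d) (hdn : IsCoprime (d : ℤ) n) (hm : (d : ℤ) * m = (d - 1) * n - r)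
    (hμ : (d : ℤ) * μ = n + r - d) (hmμ : (d - 1) * μ < m) (hmn : m < n) :
    hypSum d n r (q ^ (n : ℤ)) q = 0 := by
  have hq0 := ne_zero_of_zpow_injective hq
  have hcard : #(denIdx d) * μ < m := by
    obtain ⟨h, rfl⟩ := hodd
    rw [denIdx, card_disjSum, Nat.card_Icc]
    convert hmμ using 2
    omega
  rw [hypSum, ← sum_qPoch_shift_eq_zero (zpow_injective_pow hq hodd.pos.ne') _
    (zpow_denExp_mul_pow_ne_one hq hdn) hcard hmn]
  exact sum_congr rfl fun k _ => by rw [hypNum_zpow hq0 hodd hm hμ, hypDen_zpow hq0]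

end Summand

theorem exists_termination_shift_of_modEq {d n : ℕ} {r : ℤ} (hd : 0 < d) (hr : r ≤ (d : ℤ) - 2)
    (hmod : (n : ℤ) ≡ -r [ZMOD (d : ℤ)]) (hge : (d : ℤ) - r ≤ (n : ℤ)) :
    ∃ m μ : ℕ, (d : ℤ) * m = (d - 1) * n - r ∧ (d : ℤ) * μ = n + r - d ∧ (d - 1) * μ < m ∧
      m < n := by
  obtain ⟨t, ht⟩ := hmod.dvd
  have hd' : (0 : ℤ) < d := by exact_mod_cast hd
  have hμ : 0 ≤ -(t + 1) := by nlinarith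
  have hm : 0 ≤ (n : ℤ) + t := by nlinarith
  refine ⟨(n + t).toNat, (-(t + 1)).toNat, ?_, ?_, ?_, ?_⟩
  · rw [Int.toNat_of_nonneg hm]; linear_combination -ht
  · rw [Int.toNat_of_nonneg hμ]; linear_combination ht
  · zify [hd]
    rw [Int.toNat_of_nonneg hm, Int.toNat_of_nonneg hμ]
    nlinarith
  · zify
    rw [Int.toNat_of_nonneg hm]
    nlinarith

theorem isCoprime_of_modEq_neg {d n : ℕ} {r : ℤ} (hgcd : Int.gcd r d = 1)
    (hmod : (n : ℤ) ≡ -r [ZMOD (d : ℤ)]) : IsCoprime (d : ℤ) n := by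
  obtain ⟨t, ht⟩ := hmod.dvd
  have h := (Int.isCoprime_iff_gcd_eq_one.2 hgcd).symm.neg_right.add_mul_left_right (-t)
  rwa [show -r + d * -t = n by linear_combination ht] at h

section ProdSubring

variable {R R' : Type*} [CommRing R] [CommRing R'] (S : Subring (R × R'))

theorem mk_mul_mem {x y : R} {v w : R'} (hx : (x, v) ∈ S) (hy : (y, w) ∈ S) : (x * y, v * w) ∈ S :=
  S.mul_mem hx hy

theorem mk_pow_mem {x : R} {v : R'} (hx : (x, v) ∈ S) (k : ℕ) : (x ^ k, v ^ k) ∈ S :=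
  S.pow_mem hx k

theorem mk_prod_mem {ι : Type*} (s : Finset ι) {f : ι → R} {g : ι → R'}
    (h : ∀ i ∈ s, (f i, g i) ∈ S) : (∏ i ∈ s, f i, ∏ i ∈ s, g i) ∈ S := by
  convert S.prod_mem h using 1
  ext <;> simp [Prod.fst_prod, Prod.snd_prod]

theorem mk_sum_mem {ι : Type*} (s : Finset ι) {f : ι → R} {g : ι → R'}
    (h : ∀ i ∈ s, (f i, g i) ∈ S) : (∑ i ∈ s, f i, ∑ i ∈ s, g i) ∈ S := by
  convert S.sum_mem h using 1
  ext <;> simp [Prod.fst_sum, Prod.snd_sum]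

theorem qPoch_mk_mem {x q : R} {v w : R'} (hx : (x, v) ∈ S) (hq : (q, w) ∈ S) (k : ℕ) :
    (qPoch x q k, qPoch v w k) ∈ S := by
  convert qPoch_mem S hx hq k using 1
  ext <;> simp [qPoch, Prod.fst_prod, Prod.snd_prod]

end ProdSubring

section EvalGraph

variable {A K L : Type*} [CommRing A] [Field K] [Algebra A K] [Field L] (φ : A →+* L)

/-- The graph of the partially defined extension of `φ` to `K`: `(y, v)` lies on it when `y = N / C`
with `φ C ≠ 0` and `φ N / φ C = v`. -/
def evalGraph : Subring (K × L) where
  carrier := {p | ∃ N C : A, φ C ≠ 0 ∧ algebraMap A K N = algebraMap A K C * p.1 ∧ φ N = φ C * p.2}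
  mul_mem' := by
    rintro _ _ ⟨N, C, hC, hN, hv⟩ ⟨N', C', hC', hN', hw⟩
    refine ⟨N * N', C * C', by simp [hC, hC'], ?_, ?_⟩ <;>
      simp only [map_mul, Prod.fst_mul, Prod.snd_mul, hN, hN', hv, hw] <;> ring
  one_mem' := ⟨1, 1, by simp, by simp, by simp⟩
  add_mem' := by
    rintro _ _ ⟨N, C, hC, hN, hv⟩ ⟨N', C', hC', hN', hw⟩
    refine ⟨N * C' + N' * C, C * C', by simp [hC, hC'], ?_, ?_⟩ <;>
      simp only [map_add, map_mul, Prod.fst_add, Prod.snd_add, hN, hN', hv, hw] <;> ring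
  zero_mem' := ⟨0, 1, by simp, by simp, by simp⟩
  neg_mem' := by
    rintro _ ⟨N, C, hC, hN, hv⟩
    exact ⟨-N, C, hC, by simp [hN], by simp [hv]⟩

theorem algebraMap_mem_evalGraph (a : A) : (algebraMap A K a, φ a) ∈ evalGraph (K := K) φ :=
  ⟨a, 1, by simp, by simp, by simp⟩

variable {φ} [IsFractionRing A K]

theorem inv_mem_evalGraph {y : K} {v : L} (h : (y, v) ∈ evalGraph φ) (hv : v ≠ 0) :
    (y⁻¹, v⁻¹) ∈ evalGraph φ := by
  obtain ⟨N, C, hC, hN, hNv⟩ := h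
  have hφN : φ N ≠ 0 := by rw [hNv]; exact mul_ne_zero hC hv
  have hy : y ≠ 0 := by
    rintro rfl
    rw [mul_zero, map_eq_zero_iff _ (IsFractionRing.injective A K)] at hN
    exact hφN (by rw [hN, map_zero])
  exact ⟨C, N, hφN, by rw [hN, mul_inv_cancel_right₀ hy], by rw [hNv, mul_inv_cancel_right₀ hv]⟩

theorem zpow_mem_evalGraph {y : K} {v : L} (h : (y, v) ∈ evalGraph φ) (hv : v ≠ 0) (c : ℤ) :
    (y ^ c, v ^ c) ∈ evalGraph φ := by
  cases c with
  | ofNat k => simpa using pow_mem h k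
  | negSucc k => simpa using inv_mem_evalGraph (pow_mem h (k + 1)) (pow_ne_zero _ hv)

theorem div_mem_evalGraph {y z : K} {v w : L} (hy : (y, v) ∈ evalGraph φ)
    (hz : (z, w) ∈ evalGraph φ) (hw : w ≠ 0) : (y / z, v / w) ∈ evalGraph φ := by
  simpa [div_eq_mul_inv] using mul_mem hy (inv_mem_evalGraph hz hw)

section Summand

variable {a q : K} {u w : L} (ha : (a, u) ∈ evalGraph φ) (hq : (q, w) ∈ evalGraph φ) (hu : u ≠ 0)
  (hw : w ≠ 0)
include ha hq hu hw

theorem hypNum_mem_evalGraph (d : ℕ) (r : ℤ) (k : ℕ) :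
    (hypNum d r a q k, hypNum d r u w k) ∈ evalGraph φ := by
  have hqr := zpow_mem_evalGraph hq hw r
  have hqd := mk_pow_mem _ hq d
  refine mk_mul_mem _ (mk_mul_mem _ (mk_prod_mem _ _ fun i _ => mk_mul_mem _ ?_ ?_)
    (qPoch_mk_mem _ hqr hqd k)) (mk_pow_mem _ hq _) <;>
    exact qPoch_mk_mem _ (mk_mul_mem _ (zpow_mem_evalGraph ha hu _) hqr) hqd k

theorem hypDen_mem_evalGraph (d : ℕ) (k : ℕ) :
    (hypDen d a q k, hypDen d u w k) ∈ evalGraph φ := by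
  have hqd' := zpow_mem_evalGraph hq hw d
  have hqd := mk_pow_mem _ hq d
  refine mk_mul_mem _ (mk_prod_mem _ _ fun i _ => mk_mul_mem _ ?_ ?_) (qPoch_mk_mem _ hqd hqd k) <;>
    exact qPoch_mk_mem _ (mk_mul_mem _ (zpow_mem_evalGraph ha hu _) hqd') hqd k

theorem hypSum_mem_evalGraph (d n : ℕ) (r : ℤ) (hden : ∀ k, hypDen d u w k ≠ 0) :
    (hypSum d n r a q, hypSum d n r u w) ∈ evalGraph φ :=
  mk_sum_mem _ _ fun k _ => div_mem_evalGraph (hypNum_mem_evalGraph ha hq hu hw d r k)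
    (hypDen_mem_evalGraph ha hq hu hw d k) (hden k)

end Summand

theorem den_num_of_mem_evalGraph [IsDomain A] [UniqueFactorizationMonoid A] {y : K} {v : L}
    (h : (y, v) ∈ evalGraph φ) :
    φ (IsFractionRing.den A y) ≠ 0 ∧
      φ (IsFractionRing.num A y) = φ (IsFractionRing.den A y) * v := by
  obtain ⟨N, C, hC, hN, hNv⟩ := h
  have hNb : N * IsFractionRing.den A y = C * IsFractionRing.num A y := by
    apply IsFractionRing.injective A K
    have hb : algebraMap A K (IsFractionRing.den A y) ≠ 0 :=
      IsFractionRing.to_map_ne_zero_of_mem_nonZeroDivisors (IsFractionRing.den A y).2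
    have hy := (div_eq_iff hb).1 (IsFractionRing.mk'_num_den' A y)
    rw [map_mul, map_mul, hN, hy]
    ring
  obtain ⟨t, rfl⟩ : (IsFractionRing.den A y : A) ∣ C :=
    (IsFractionRing.num_den_reduced A y).symm.dvd_of_dvd_mul_right ⟨N, by rw [← hNb, mul_comm]⟩
  refine ⟨fun h0 => hC (by rw [map_mul, h0, zero_mul]), mul_left_cancel₀ hC ?_⟩
  have := congrArg φ hNb
  rw [map_mul, map_mul, hNv] at this
  linear_combination -this

theorem exists_eq_mul_div_of_mem_evalGraph [IsDomain A] [UniqueFactorizationMonoid A]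
    {φ₁ φ₂ : A →+* L} {p₁ p₂ : A} (hp₁ : Prime p₁) (hp₂ : Prime p₂) (h₁ : ∀ f, φ₁ f = 0 ↔ p₁ ∣ f)
    (h₂ : ∀ f, φ₂ f = 0 ↔ p₂ ∣ f) (h₁₂ : φ₂ p₁ ≠ 0) {y : K} (hy₁ : (y, 0) ∈ evalGraph φ₁)
    (hy₂ : (y, 0) ∈ evalGraph φ₂) :
    ∃ B C : A, C ≠ 0 ∧ IsRelPrime C (p₁ * p₂) ∧
      y = algebraMap A K (p₁ * p₂) * (algebraMap A K B / algebraMap A K C) := by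
  obtain ⟨hden₁, hnum₁⟩ := den_num_of_mem_evalGraph hy₁
  obtain ⟨hden₂, hnum₂⟩ := den_num_of_mem_evalGraph hy₂
  rw [mul_zero] at hnum₁ hnum₂
  obtain ⟨B₁, hB₁⟩ := (h₁ _).1 hnum₁
  have hp₂B₁ : p₂ ∣ p₁ * B₁ := hB₁ ▸ (h₂ _).1 hnum₂
  obtain ⟨B, rfl⟩ := (hp₂.dvd_or_dvd hp₂B₁).resolve_left fun h => h₁₂ ((h₂ _).2 h)
  have hrel (p : A) (hp : Prime p) (φ : A →+* L) (hφ : ∀ f, φ f = 0 ↔ p ∣ f)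
      (hden : φ (IsFractionRing.den A y) ≠ 0) : IsRelPrime (IsFractionRing.den A y : A) p :=
    ((hp.irreducible.isRelPrime_iff_not_dvd).2 fun h => hden ((hφ _).2 h)).symm
  refine ⟨B, IsFractionRing.den A y, nonZeroDivisors.coe_ne_zero _,
    (hrel p₁ hp₁ φ₁ h₁ hden₁).mul_right (hrel p₂ hp₂ φ₂ h₂ hden₂), ?_⟩
  rw [← mul_div_assoc, ← map_mul, mul_assoc, ← hB₁]
  exact (IsFractionRing.mk'_num_den' A y).symm

end EvalGraph

theorem prime_of_forall_map_eq_zero_iff_dvd {R L : Type*} [CommRing R] [Field L] {φ : R →+* L}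
    {p : R} (hp : p ≠ 0) (h : ∀ f, φ f = 0 ↔ p ∣ f) : Prime p := by
  have hker : RingHom.ker φ = Ideal.span {p} := by
    ext f
    rw [RingHom.mem_ker, Ideal.mem_span_singleton, h]
  exact (Ideal.span_singleton_prime hp).1 (hker ▸ RingHom.ker_isPrime φ)

open Polynomial in
/-- Over the fraction field `p` is linear, hence irreducible, and the common root `u` keeps it from
being coprime to `f`; Gauss's lemma brings the divisibility back to `R`. -/
theorem Polynomial.IsPrimitive.dvd_of_eval₂_eq_zero {R L : Type*} [CommRing R] [IsDomain R]
    [IsGCDMonoid R] [Field L] {ι : R →+* L} (hι : Function.Injective ι) {p f : R[X]}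
    (hp : p.IsPrimitive) (hdeg : p.natDegree = 1) {u : L} (hpu : p.eval₂ ι u = 0)
    (hfu : f.eval₂ ι u = 0) : p ∣ f := by
  let j : FractionRing R →+* L := IsFractionRing.lift hι
  have hj : j.comp (algebraMap R (FractionRing R)) = ι :=
    RingHom.ext (IsFractionRing.lift_algebraMap hι)
  refine hp.dvd_of_fraction_map_dvd_fraction_map (K := FractionRing R) ?_
  have hirr : Irreducible (p.map (algebraMap R (FractionRing R))) := by
    refine irreducible_of_degree_eq_one ?_
    rw [degree_map_eq_of_injective (IsFractionRing.injective R _), degree_eq_natDegree hp.ne_zero,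
      hdeg, Nat.cast_one]
  by_contra hndvd
  obtain ⟨a, b, hab⟩ := (hirr.coprime_iff_not_dvd).2 hndvd
  have := congrArg (eval₂ j u) hab
  simp [eval₂_map, hj, hpu, hfu] at this

section TwoVariables

open MvPolynomial (finSuccEquiv)

theorem qv_ne_zero : qv ≠ 0 :=
  (map_ne_zero_iff _ (IsFractionRing.injective MvP FF)).2 (MvPolynomial.X_ne_zero 1)

theorem qv_pow_ne_one {t : ℕ} (ht : t ≠ 0) : qv ^ t ≠ 1 := by
  intro h
  rw [qv, ← map_pow, ← map_one (algebraMap MvP FF)] at h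
  have h2 := congrArg (MvPolynomial.eval fun _ => (2 : ℚ)) (IsFractionRing.injective MvP FF h)
  simp only [map_pow, MvPolynomial.eval_X, map_one] at h2
  exact (one_lt_pow₀ (by norm_num : (1 : ℚ) < 2) ht).ne' h2

theorem qv_zpow_injective : Function.Injective (qv ^ · : ℤ → FF) := by
  intro a b h
  have h1 : qv ^ (a - b) = 1 := by
    simp only at h
    rw [zpow_sub₀ qv_ne_zero, h, div_self (zpow_ne_zero _ qv_ne_zero)]
  have key (t : ℕ) (ht : qv ^ (t : ℤ) = 1) : t = 0 := by
    by_contra h0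
    exact qv_pow_ne_one h0 (by rwa [zpow_natCast] at ht)
  obtain ⟨t, ht | ht⟩ := Int.eq_nat_or_neg (a - b) <;> rw [ht] at h1
  · have := key t h1
    omega
  · rw [zpow_neg, inv_eq_one] at h1
    have := key t h1
    omega

noncomputable def evalAt (u : FF) : MvP →+* FF :=
  MvPolynomial.eval₂Hom (algebraMap ℚ FF) ![u, qv]

@[simp]
theorem evalAt_X_zero (u : FF) : evalAt u (MvPolynomial.X 0) = u := by
  simp [evalAt]

@[simp]
theorem evalAt_X_one (u : FF) : evalAt u (MvPolynomial.X 1) = qv := by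
  simp [evalAt]

theorem av_mem_evalGraph (u : FF) : (av, u) ∈ evalGraph (evalAt u) := by
  have h := algebraMap_mem_evalGraph (K := FF) (evalAt u) (MvPolynomial.X 0)
  rwa [evalAt_X_zero] at h

theorem qv_mem_evalGraph (u : FF) : (qv, qv) ∈ evalGraph (evalAt u) := by
  have h := algebraMap_mem_evalGraph (K := FF) (evalAt u) (MvPolynomial.X 1)
  rwa [evalAt_X_one] at h

-- `finSuccEquiv` views `MvP` as polynomials in `a` over `ℚ[q]`.
noncomputable def coeffEmb : MvPolynomial (Fin 1) ℚ →+* FF :=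
  (algebraMap MvP FF).comp (MvPolynomial.rename fun _ : Fin 1 => (1 : Fin 2)).toRingHom

theorem coeffEmb_injective : Function.Injective coeffEmb :=
  (IsFractionRing.injective MvP FF).comp
    (MvPolynomial.rename_injective _ fun _ _ _ => Subsingleton.elim _ _)

theorem finSuccEquiv_X_one :
    finSuccEquiv ℚ 1 (MvPolynomial.X 1) = Polynomial.C (MvPolynomial.X 0) :=
  MvPolynomial.finSuccEquiv_X_succ (j := 0)

theorem evalAt_eq_eval₂ (u : FF) (f : MvP) :
    evalAt u f = (finSuccEquiv ℚ 1 f).eval₂ coeffEmb u := by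
  suffices evalAt u = (Polynomial.eval₂RingHom coeffEmb u).comp (finSuccEquiv ℚ 1).toRingHom from
    RingHom.congr_fun this f
  refine MvPolynomial.ringHom_ext' (Subsingleton.elim _ _) (Fin.forall_fin_two.2 ⟨?_, ?_⟩)
  · simp [MvPolynomial.finSuccEquiv_X_zero]
  · simp [finSuccEquiv_X_one, coeffEmb, qv]

theorem evalAt_eq_zero_iff_dvd {u : FF} {p : MvP} (hp : (finSuccEquiv ℚ 1 p).IsPrimitive)
    (hdeg : (finSuccEquiv ℚ 1 p).natDegree = 1) (hpu : evalAt u p = 0) (f : MvP) :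
    evalAt u f = 0 ↔ p ∣ f := by
  refine ⟨fun hf => (map_dvd_iff (finSuccEquiv ℚ 1)).1
    (hp.dvd_of_eval₂_eq_zero coeffEmb_injective hdeg (u := u) ?_ ?_), fun ⟨g, hg⟩ => by
      rw [hg, map_mul, hpu, zero_mul]⟩ <;> rwa [← evalAt_eq_eval₂]

theorem evalAt_zpow_eq_zero_iff (n : ℕ) (f : MvP) :
    evalAt (qv ^ (n : ℤ)) f = 0 ↔ MvPolynomial.X 0 - MvPolynomial.X 1 ^ n ∣ f := by
  have he : finSuccEquiv ℚ 1 (MvPolynomial.X 0 - MvPolynomial.X 1 ^ n)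
      = Polynomial.X - Polynomial.C (MvPolynomial.X 0 ^ n) := by
    simp [MvPolynomial.finSuccEquiv_X_zero, finSuccEquiv_X_one]
  refine evalAt_eq_zero_iff_dvd ?_ ?_ (by simp) f <;> rw [he]
  exacts [(Polynomial.monic_X_sub_C _).isPrimitive, Polynomial.natDegree_X_sub_C _]

theorem evalAt_zpow_neg_eq_zero_iff (n : ℕ) (f : MvP) :
    evalAt (qv ^ (-(n : ℤ))) f = 0 ↔ 1 - MvPolynomial.X 0 * MvPolynomial.X 1 ^ n ∣ f := by
  have he : finSuccEquiv ℚ 1 (1 - MvPolynomial.X 0 * MvPolynomial.X 1 ^ n)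
      = Polynomial.C (-MvPolynomial.X 0 ^ n) * Polynomial.X + Polynomial.C 1 := by
    simp only [map_sub, map_one, map_mul, map_pow, map_neg, MvPolynomial.finSuccEquiv_X_zero,
      finSuccEquiv_X_one]
    ring
  refine evalAt_eq_zero_iff_dvd ?_ ?_ ?_ f
  · rw [he, Polynomial.isPrimitive_iff_isUnit_of_C_dvd]
    rintro c ⟨g, hg⟩
    have h0 := congrArg (Polynomial.coeff · 0) hg
    simp only [Polynomial.coeff_add, Polynomial.coeff_C_zero, Polynomial.coeff_C_mul] at h0
    exact IsUnit.of_mul_eq_one _ (by simpa using h0.symm)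
  · rw [he, Polynomial.natDegree_linear (neg_ne_zero.2 (pow_ne_zero _ (MvPolynomial.X_ne_zero 0)))]
  · simp [inv_mul_cancel₀ (pow_ne_zero _ qv_ne_zero)]

theorem prime_X_zero_sub_X_one_pow (n : ℕ) :
    Prime (MvPolynomial.X 0 - MvPolynomial.X 1 ^ n : MvP) := by
  refine prime_of_forall_map_eq_zero_iff_dvd (fun h => ?_) (evalAt_zpow_eq_zero_iff n)
  have := congrArg (evalAt 0) h
  simp [qv_ne_zero] at this

theorem prime_one_sub_X_zero_mul_X_one_pow (n : ℕ) :
    Prime (1 - MvPolynomial.X 0 * MvPolynomial.X 1 ^ n : MvP) := by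
  refine prime_of_forall_map_eq_zero_iff_dvd (fun h => ?_) (evalAt_zpow_neg_eq_zero_iff n)
  have := congrArg (evalAt 0) h
  simp at this

end TwoVariables

theorem stmt8_general (d : ℕ) (hodd : Odd d) (r : ℤ) (hr : r ≤ (d : ℤ) - 2)
    (hgcd : Int.gcd r d = 1) (n : ℕ)
    (hmod : (n : ℤ) ≡ -r [ZMOD (d : ℤ)]) (hge : (d : ℤ) - r ≤ (n : ℤ)) :
    CongrZero
      (∑ k ∈ Finset.range n,
        ((∏ i ∈ Finset.Icc 1 ((d - 1) / 2),
            poch (av ^ ((d : ℤ) + 1 - 2 * (i : ℤ)) * qv ^ r) (qv ^ d) k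
              * poch (av ^ (2 * (i : ℤ) - (d : ℤ) - 1) * qv ^ r) (qv ^ d) k)
          * poch (qv ^ r) (qv ^ d) k * qv ^ (d * k))
        / ((∏ i ∈ Finset.Icc 1 ((d - 1) / 2),
            poch (av ^ ((d : ℤ) - 2 * (i : ℤ)) * qv ^ (d : ℤ)) (qv ^ d) k
              * poch (av ^ (2 * (i : ℤ) - (d : ℤ)) * qv ^ (d : ℤ)) (qv ^ d) k)
          * poch (qv ^ d) (qv ^ d) k))
      ((1 - MvPolynomial.X 0 * MvPolynomial.X 1 ^ n)
        * (MvPolynomial.X 0 - MvPolynomial.X 1 ^ n)) := by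
  obtain ⟨m, μ, hm, hμ, hmμ, hmn⟩ := exists_termination_shift_of_modEq hodd.pos hr hmod hge
  have hdn := isCoprime_of_modEq_neg hgcd hmod
  have hmem (e : ℤ) (he : IsCoprime (d : ℤ) e) :
      (hypSum d n r av qv, hypSum d n r (qv ^ e) qv) ∈ evalGraph (evalAt (qv ^ e)) :=
    hypSum_mem_evalGraph (av_mem_evalGraph _) (qv_mem_evalGraph _) (zpow_ne_zero _ qv_ne_zero)
      qv_ne_zero d n r (hypDen_zpow_ne_zero qv_zpow_injective hodd.pos.ne' he)
  have hzero : hypSum d n r (qv ^ (n : ℤ)) qv = 0 :=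
    hypSum_zpow_eq_zero qv_zpow_injective hodd hdn hm hμ hmμ hmn
  have hzero' : hypSum d n r (qv ^ (-(n : ℤ))) qv = 0 := by
    rw [zpow_neg, hypSum_inv, hzero]
  have hsep : evalAt (qv ^ (n : ℤ)) (1 - MvPolynomial.X 0 * MvPolynomial.X 1 ^ n) ≠ 0 := by
    rw [map_sub, map_one, map_mul, map_pow, evalAt_X_zero, evalAt_X_one, zpow_natCast, ← pow_add,
      sub_ne_zero]
    exact (qv_pow_ne_one (by omega)).symm
  exact exists_eq_mul_div_of_mem_evalGraph (prime_one_sub_X_zero_mul_X_one_pow n)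
    (prime_X_zero_sub_X_one_pow n) (evalAt_zpow_neg_eq_zero_iff n) (evalAt_zpow_eq_zero_iff n) hsep
    (hzero' ▸ hmem _ hdn.neg_right) (hzero ▸ hmem _ hdn)

theorem stmt8 (d : ℕ) (hd : 3 ≤ d) (hodd : Odd d) (r : ℤ) (hr : r ≤ (d : ℤ) - 2)
    (hgcd : Int.gcd r d = 1) (n : ℕ) (hn : 0 < n)
    (hmod : (n : ℤ) ≡ -r [ZMOD (d : ℤ)]) (hge : (d : ℤ) - r ≤ (n : ℤ)) :
    CongrZero
      (∑ k ∈ Finset.range n,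
        ((∏ i ∈ Finset.Icc 1 ((d - 1) / 2),
            poch (av ^ ((d : ℤ) + 1 - 2 * (i : ℤ)) * qv ^ r) (qv ^ d) k
              * poch (av ^ (2 * (i : ℤ) - (d : ℤ) - 1) * qv ^ r) (qv ^ d) k)
          * poch (qv ^ r) (qv ^ d) k * qv ^ (d * k))
        / ((∏ i ∈ Finset.Icc 1 ((d - 1) / 2),
            poch (av ^ ((d : ℤ) - 2 * (i : ℤ)) * qv ^ (d : ℤ)) (qv ^ d) k
              * poch (av ^ (2 * (i : ℤ) - (d : ℤ)) * qv ^ (d : ℤ)) (qv ^ d) k)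
          * poch (qv ^ d) (qv ^ d) k))
      ((1 - MvPolynomial.X 0 * MvPolynomial.X 1 ^ n)
        * (MvPolynomial.X 0 - MvPolynomial.X 1 ^ n)) :=
  stmt8_general d hodd r hr hgcd n hmod hge
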